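/- Let M, N ≥ 1 be integers, let a_b, a_d ∈ ℂ^M have unit-modulus entries with a_b^H a_d ≠ 0, let β_d, β_br, β_ru, τ̄ > 0, let u be a standard complex Gaussian random vector in ℂ^N, and set h_d = √β_d·a_d, Y = ∑_{n=1}^N |u_n|, ψ = a_b^H a_d/|a_b^H a_d|, and SNR_unfav = ‖h_d + √(β_br β_ru)·ψ·Y·a_b‖₂²·τ̄. Then E[SNR_unfav] = (β_d·M + N·√π·|a_b^H a_d|·√(β_d β_br β_ru) + β_br·β_ru·M·(N + π·N(N−1)/4))·τ̄. -/

import Mathlib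

open MeasureTheory ProbabilityTheory Complex

noncomputable section

/-- A standard complex Gaussian random variable: real and imaginary parts are
independent real Gaussians with mean 0 and variance 1/2. -/
def IsStdCGaussian {Ω : Type*} [MeasurableSpace Ω] (P : Measure Ω) (X : Ω → ℂ) : Prop :=
  Measurable X ∧
    P.map (fun ω => (X ω).re) = gaussianReal 0 (1/2) ∧
    P.map (fun ω => (X ω).im) = gaussianReal 0 (1/2) ∧
    IndepFun (fun ω => (X ω).re) (fun ω => (X ω).im) P

/-- A standard complex Gaussian random vector: i.i.d. standard complex Gaussian entries. -/
def IsStdCGaussianVec {Ω : Type*} [MeasurableSpace Ω] (P : Measure Ω) {n : ℕ}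
    (X : Ω → Fin n → ℂ) : Prop :=
  (∀ i, IsStdCGaussian P (fun ω => X ω i)) ∧
    iIndepFun (fun i ω => X ω i) P

/-- Squared Euclidean norm of a complex vector. -/
def cnormSq {m : ℕ} (v : Fin m → ℂ) : ℝ := ∑ i, ‖v i‖ ^ 2

/-- Hermitian inner product `a^H b`. -/
def dotH {m : ℕ} (a b : Fin m → ℂ) : ℂ := ∑ i, (starRingEnd ℂ) (a i) * b i

/-! The law of a standard complex Gaussian has density `π⁻¹ exp (-‖z‖²)` on `ℂ`, so by polar
coordinates `E ‖u_n‖ = Γ(3/2) = √π / 2` and `E ‖u_n‖² = Γ(2) = 1`. The phase `ψ` aligns the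
reflected path with the direct one, which makes the SNR the quadratic
`β_d M + 2 √(β_d β_br β_ru) |a_bᴴ a_d| Y + β_br β_ru M Y²` in `Y`; by pairwise independence
`E[Y²] = N E‖u_n‖² + N (N - 1) (E‖u_n‖)²`. -/

theorem MeasurableEquiv.map_withDensity_comp {α β : Type*} [MeasurableSpace α]
    [MeasurableSpace β] (e : α ≃ᵐ β) (μ : Measure α) {f : β → ENNReal} (hf : Measurable f) :
    (μ.withDensity (f ∘ e)).map e = (μ.map e).withDensity f := by
  ext s hs
  rw [Measure.map_apply e.measurable hs, withDensity_apply _ (e.measurable hs),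
    withDensity_apply _ hs, setLIntegral_map hs hf e.measurable, Function.comp_def]

theorem gaussianPDFReal_half (x : ℝ) :
    gaussianPDFReal 0 (1/2) x = (Real.sqrt Real.pi)⁻¹ * Real.exp (-x ^ 2) := by
  rw [gaussianPDFReal, show 2 * Real.pi * ((1/2 : NNReal) : ℝ) = Real.pi by push_cast; ring,
    show 2 * ((1/2 : NNReal) : ℝ) = 1 by push_cast; ring, sub_zero, div_one]

def stdCGaussianPDF (z : ℂ) : ℝ := Real.pi⁻¹ * Real.exp (-‖z‖ ^ 2)

theorem stdCGaussianPDF_nonneg (z : ℂ) : 0 ≤ stdCGaussianPDF z := by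
  unfold stdCGaussianPDF
  positivity

theorem measurable_stdCGaussianPDF : Measurable stdCGaussianPDF := by
  unfold stdCGaussianPDF
  fun_prop

theorem gaussianPDFReal_half_mul (z : ℂ) :
    gaussianPDFReal 0 (1/2) z.re * gaussianPDFReal 0 (1/2) z.im = stdCGaussianPDF z := by
  have hπ : Real.pi⁻¹ = (Real.sqrt Real.pi)⁻¹ * (Real.sqrt Real.pi)⁻¹ := by
    rw [← mul_inv, Real.mul_self_sqrt Real.pi_pos.le]
  rw [gaussianPDFReal_half, gaussianPDFReal_half, stdCGaussianPDF, Complex.sq_norm,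
    Complex.normSq_apply, hπ,
    show -(z.re * z.re + z.im * z.im) = -z.re ^ 2 + -z.im ^ 2 by ring, Real.exp_add]
  ring

theorem Complex.integral_norm_rpow_mul_exp_neg_sq {q : ℝ} (hq : -2 < q) :
    ∫ z : ℂ, ‖z‖ ^ q * Real.exp (-‖z‖ ^ 2) = Real.pi * Real.Gamma ((q + 2) / 2) := by
  have h := Complex.integral_rpow_mul_exp_neg_rpow one_le_two hq
  simp only [Real.rpow_two] at h
  rw [h]
  ring

theorem Complex.integrable_norm_rpow_mul_exp_neg_sq {q : ℝ} (hq : -2 < q) :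
    Integrable (fun z : ℂ => ‖z‖ ^ q * Real.exp (-‖z‖ ^ 2)) := by
  have hΓ : 0 < Real.Gamma ((q + 2) / 2) := Real.Gamma_pos_of_pos (by linarith)
  refine Integrable.of_integral_ne_zero ?_
  rw [Complex.integral_norm_rpow_mul_exp_neg_sq hq]
  positivity

section StdCGaussian

variable {Ω : Type*} [MeasurableSpace Ω] {P : Measure Ω} [IsFiniteMeasure P] {X : Ω → ℂ}
  {N : ℕ} {u : Ω → Fin N → ℂ}

theorem map_eq_withDensity_of_isStdCGaussian (hX : IsStdCGaussian P X) :
    P.map X = volume.withDensity (fun z => ENNReal.ofReal (stdCGaussianPDF z)) := by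
  obtain ⟨hXm, hre, him, hind⟩ := hX
  let e := Complex.measurableEquivRealProd
  let F := fun p : ℝ × ℝ => gaussianPDF 0 (1/2) p.1 * gaussianPDF 0 (1/2) p.2
  have hF : Measurable F := by fun_prop
  have hpair : P.map (e ∘ X) = (gaussianReal 0 (1/2)).prod (gaussianReal 0 (1/2)) := by
    have h := (indepFun_iff_map_prod_eq_prod_map_map (by fun_prop) (by fun_prop)).mp hind
    rwa [hre, him] at h
  have hdensity : F ∘ e = fun z => ENNReal.ofReal (stdCGaussianPDF z) := by
    funext z
    simp only [F, Function.comp_apply]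
    rw [gaussianPDF, gaussianPDF, ← ENNReal.ofReal_mul (gaussianPDFReal_nonneg _ _ _)]
    exact congrArg ENNReal.ofReal (gaussianPDFReal_half_mul z)
  calc P.map X = (P.map (e ∘ X)).map e.symm := by
        rw [Measure.map_map e.symm.measurable (by fun_prop), ← Function.comp_assoc,
          e.symm_comp_self, Function.id_comp]
    _ = ((volume.map e).withDensity F).map e.symm := by
        rw [hpair, gaussianReal_of_var_ne_zero 0 (by norm_num), prod_withDensity
          (measurable_gaussianPDF 0 _) (measurable_gaussianPDF 0 _),
          Complex.volume_preserving_equiv_real_prod.map_eq, Measure.volume_eq_prod]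
    _ = volume.withDensity (F ∘ e) := by
        rw [← e.map_withDensity_comp _ hF, e.map_symm_map]
    _ = _ := by rw [hdensity]

theorem integrable_norm_rpow_of_isStdCGaussian (hX : IsStdCGaussian P X) {q : ℝ} (hq : -2 < q) :
    Integrable (fun ω => ‖X ω‖ ^ q) P := by
  have hmap : Integrable (fun z : ℂ => ‖z‖ ^ q) (P.map X) := by
    rw [map_eq_withDensity_of_isStdCGaussian hX,
      integrable_withDensity_iff_integrable_smul'
        measurable_stdCGaussianPDF.ennreal_ofReal (by simp)]
    refine ((Complex.integrable_norm_rpow_mul_exp_neg_sq hq).const_mul Real.pi⁻¹).congr ?_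
    refine ae_of_all _ fun z => ?_
    dsimp only
    rw [ENNReal.toReal_ofReal (stdCGaussianPDF_nonneg z), smul_eq_mul, stdCGaussianPDF]
    ring
  exact (integrable_map_measure (measurable_norm.pow_const q).aestronglyMeasurable
    hX.1.aemeasurable).mp hmap

theorem integral_norm_rpow_of_isStdCGaussian (hX : IsStdCGaussian P X) {q : ℝ} (hq : -2 < q) :
    ∫ ω, ‖X ω‖ ^ q ∂P = Real.Gamma ((q + 2) / 2) := by
  calc ∫ ω, ‖X ω‖ ^ q ∂P = ∫ z, ‖z‖ ^ q ∂(P.map X) :=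
        (integral_map hX.1.aemeasurable (measurable_norm.pow_const q).aestronglyMeasurable).symm
    _ = ∫ z : ℂ, Real.pi⁻¹ * (‖z‖ ^ q * Real.exp (-‖z‖ ^ 2)) := by
        rw [map_eq_withDensity_of_isStdCGaussian hX,
          integral_withDensity_eq_integral_toReal_smul
            measurable_stdCGaussianPDF.ennreal_ofReal (by simp)]
        congr 1 with z
        rw [ENNReal.toReal_ofReal (stdCGaussianPDF_nonneg z), smul_eq_mul, stdCGaussianPDF]
        ring
    _ = Real.Gamma ((q + 2) / 2) := by
        rw [integral_const_mul, Complex.integral_norm_rpow_mul_exp_neg_sq hq]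
        field_simp

theorem integral_norm_of_isStdCGaussian (hX : IsStdCGaussian P X) :
    ∫ ω, ‖X ω‖ ∂P = Real.sqrt Real.pi / 2 := by
  have h := integral_norm_rpow_of_isStdCGaussian hX (q := 1) (by norm_num)
  rw [show ((1 : ℝ) + 2) / 2 = 1 / 2 + 1 by norm_num, Real.Gamma_add_one (by norm_num),
    Real.Gamma_one_half_eq] at h
  simp only [Real.rpow_one] at h
  rw [h]
  ring

theorem integral_norm_sq_of_isStdCGaussian (hX : IsStdCGaussian P X) :
    ∫ ω, ‖X ω‖ ^ 2 ∂P = 1 := by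
  have h := integral_norm_rpow_of_isStdCGaussian hX (q := 2) (by norm_num)
  rw [show ((2 : ℝ) + 2) / 2 = 2 by norm_num, Real.Gamma_two] at h
  simpa [Real.rpow_two] using h

theorem memLp_norm_of_isStdCGaussian (hX : IsStdCGaussian P X) :
    MemLp (fun ω => ‖X ω‖) 2 P :=
  (memLp_two_iff_integrable_sq hX.1.norm.aestronglyMeasurable).mpr <| by
    simpa [Real.rpow_two] using integrable_norm_rpow_of_isStdCGaussian hX (q := 2) (by norm_num)

theorem memLp_sum_norm_of_isStdCGaussianVec (hu : IsStdCGaussianVec P u) :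
    MemLp (fun ω => ∑ n, ‖u ω n‖) 2 P :=
  memLp_finsetSum _ fun n _ => memLp_norm_of_isStdCGaussian (hu.1 n)

theorem integral_sum_norm_of_isStdCGaussianVec (hu : IsStdCGaussianVec P u) :
    ∫ ω, ∑ n, ‖u ω n‖ ∂P = N * (Real.sqrt Real.pi / 2) := by
  simp [integral_finsetSum _ fun n _ => (memLp_norm_of_isStdCGaussian (hu.1 n)).integrable
    one_le_two, integral_norm_of_isStdCGaussian (hu.1 _)]

end StdCGaussian

section SecondMoments

variable {Ω : Type*} [MeasurableSpace Ω] {P : Measure Ω} [IsProbabilityMeasure P]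

theorem integral_sq_sum_of_pairwise_indepFun {ι : Type*} [Fintype ι] {X : ι → Ω → ℝ}
    (hind : Pairwise fun i j => X i ⟂ᵢ[P] X j) (hX : ∀ i, MemLp (X i) 2 P) {m s : ℝ}
    (hm : ∀ i, ∫ ω, X i ω ∂P = m) (hs : ∀ i, ∫ ω, X i ω ^ 2 ∂P = s) :
    ∫ ω, (∑ i, X i ω) ^ 2 ∂P =
      Fintype.card ι * s + Fintype.card ι * (Fintype.card ι - 1) * m ^ 2 := by
  have hL2 : MemLp (∑ i, X i) 2 P := memLp_finsetSum' _ fun i _ => hX i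
  have hmean : P[∑ i, X i] = Fintype.card ι * m := by
    simp [Finset.sum_apply, integral_finsetSum _ fun i _ => (hX i).integrable one_le_two, hm]
  have hvar : Var[∑ i, X i; P] = Fintype.card ι * (s - m ^ 2) := by
    rw [IndepFun.variance_sum (fun i _ => hX i) fun i _ j _ hij => hind hij]
    simp only [variance_eq_sub (hX _), Pi.pow_apply, hs, hm, Finset.sum_const, Finset.card_univ,
      nsmul_eq_mul]
  calc ∫ ω, (∑ i, X i ω) ^ 2 ∂P = Var[∑ i, X i; P] + P[∑ i, X i] ^ 2 := by
        rw [variance_eq_sub hL2]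
        simp [Finset.sum_apply]
    _ = _ := by
        rw [hvar, hmean]
        ring

theorem integral_quadratic_of_memLp {Y : Ω → ℝ} (hY : MemLp Y 2 P) (a b c : ℝ) :
    ∫ ω, (a + b * Y ω + c * Y ω ^ 2) ∂P = a + b * ∫ ω, Y ω ∂P + c * ∫ ω, Y ω ^ 2 ∂P := by
  have hYint := hY.integrable one_le_two
  have haff : Integrable (fun ω => a + b * Y ω) P := (integrable_const a).add (hYint.const_mul b)
  rw [integral_add haff (hY.integrable_sq.const_mul c),
    integral_add (integrable_const a) (hYint.const_mul b), integral_const, integral_const_mul,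
    integral_const_mul, probReal_univ, one_smul]

theorem integral_sq_sum_norm_of_isStdCGaussianVec {N : ℕ} {u : Ω → Fin N → ℂ}
    (hu : IsStdCGaussianVec P u) :
    ∫ ω, (∑ n, ‖u ω n‖) ^ 2 ∂P = N + Real.pi * N * (N - 1) / 4 := by
  rw [integral_sq_sum_of_pairwise_indepFun (X := fun n ω => ‖u ω n‖)
      (fun i j hij => (hu.2.indepFun hij).comp measurable_norm measurable_norm)
      (fun n => memLp_norm_of_isStdCGaussian (hu.1 n))
      (fun n => integral_norm_of_isStdCGaussian (hu.1 n))
      (fun n => integral_norm_sq_of_isStdCGaussian (hu.1 n)),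
    div_pow, Real.sq_sqrt Real.pi_pos.le, Fintype.card_fin]
  ring

end SecondMoments

section CoherentCombining

variable {m : ℕ}

theorem cnormSq_add (v w : Fin m → ℂ) :
    cnormSq (v + w) = cnormSq v + cnormSq w + 2 * (dotH v w).re := by
  simp only [cnormSq, dotH, Pi.add_apply, Complex.re_sum, Finset.mul_sum,
    ← Finset.sum_add_distrib]
  refine Finset.sum_congr rfl fun i _ => ?_
  rw [Complex.sq_norm, Complex.sq_norm, Complex.sq_norm, Complex.normSq_add,
    ← Complex.conj_re, map_mul, Complex.conj_conj, mul_comm]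

theorem cnormSq_smul (z : ℂ) (v : Fin m → ℂ) : cnormSq (z • v) = ‖z‖ ^ 2 * cnormSq v := by
  simp [cnormSq, Finset.mul_sum, mul_pow]

theorem cnormSq_of_norm_eq_one {v : Fin m → ℂ} (hv : ∀ i, ‖v i‖ = 1) : cnormSq v = m := by
  simp [cnormSq, hv]

theorem dotH_smul_smul (z w : ℂ) (v u : Fin m → ℂ) :
    dotH (z • v) (w • u) = (starRingEnd ℂ) z * w * dotH v u := by
  simp only [dotH, Finset.mul_sum, Pi.smul_apply, smul_eq_mul, map_mul]
  exact Finset.sum_congr rfl fun i _ => by ring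

theorem conj_dotH (v w : Fin m → ℂ) : (starRingEnd ℂ) (dotH v w) = dotH w v := by
  simp only [dotH, map_sum, map_mul, Complex.conj_conj, mul_comm]

theorem cnormSq_add_phase_smul {a b : Fin m → ℂ} (ha : ∀ i, ‖a i‖ = 1) (hb : ∀ i, ‖b i‖ = 1)
    (hba : dotH b a ≠ 0) (x y : ℝ) :
    cnormSq (fun i => (x : ℂ) * a i + (y : ℂ) * (dotH b a / (‖dotH b a‖ : ℂ)) * b i) =
      x ^ 2 * m + 2 * x * y * ‖dotH b a‖ + y ^ 2 * m := by
  set s := dotH b a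
  have hs : (‖s‖ : ℂ) ≠ 0 := by exact_mod_cast norm_ne_zero_iff.mpr hba
  have hphase : ‖s / (‖s‖ : ℂ)‖ = 1 := by
    rw [norm_div, Complex.norm_real, norm_norm, div_self (norm_ne_zero_iff.mpr hba)]
  have halign : s / (‖s‖ : ℂ) * (starRingEnd ℂ) s = ‖s‖ := by
    rw [div_mul_eq_mul_div, Complex.mul_conj, Complex.normSq_eq_norm_sq, div_eq_iff hs]
    push_cast
    ring
  have hvec : (fun i => (x : ℂ) * a i + (y : ℂ) * (s / (‖s‖ : ℂ)) * b i) =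
      (x : ℂ) • a + ((y : ℂ) * (s / (‖s‖ : ℂ))) • b := by
    funext i
    simp [mul_assoc]
  rw [hvec, cnormSq_add, cnormSq_smul, cnormSq_smul, dotH_smul_smul, ← conj_dotH,
    cnormSq_of_norm_eq_one ha, cnormSq_of_norm_eq_one hb, norm_mul, hphase,
    Complex.conj_ofReal, mul_assoc, mul_assoc, halign]
  simp only [Complex.norm_real, Real.norm_eq_abs, sq_abs, mul_one, ← Complex.ofReal_mul,
    Complex.ofReal_re]
  ring

end CoherentCombining

theorem mean_snr_unfavourable_general
    {Ω : Type*} [MeasurableSpace Ω] (P : Measure Ω) [IsProbabilityMeasure P]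
    (M N : ℕ)
    (a_b a_d : Fin M → ℂ) (hab : ∀ i, ‖a_b i‖ = 1)
    (had : ∀ i, ‖a_d i‖ = 1) (habd : dotH a_b a_d ≠ 0)
    (βd βbr βru τ : ℝ) (hβd : 0 < βd) (hβbr : 0 < βbr) (hβru : 0 < βru)
    (u : Ω → Fin N → ℂ) (hu : IsStdCGaussianVec P u)
    (h_d : Fin M → ℂ) (hhd : h_d = fun i => (Real.sqrt βd : ℂ) * a_d i)
    (Y : Ω → ℝ) (hY : Y = fun ω => ∑ n, ‖u ω n‖)
    (ψ : ℂ) (hψ : ψ = dotH a_b a_d / (‖dotH a_b a_d‖ : ℂ))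
    (SNR : Ω → ℝ)
    (hSNR : SNR = fun ω =>
      cnormSq (fun i =>
        h_d i + (Real.sqrt (βbr * βru) : ℂ) * ψ * (Y ω : ℂ) * a_b i) * τ) :
    ∫ ω, SNR ω ∂P =
      (βd * M + N * Real.sqrt Real.pi * ‖dotH a_b a_d‖
          * Real.sqrt (βd * βbr * βru)
        + βbr * βru * M * (N + Real.pi * N * (N - 1) / 4)) * τ := by
  set c := Real.sqrt (βbr * βru)
  have hexpand : ∀ ω, SNR ω = (βd * M + 2 * (Real.sqrt βd * c * ‖dotH a_b a_d‖) * Y ω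
      + c ^ 2 * M * Y ω ^ 2) * τ := by
    intro ω
    have h := cnormSq_add_phase_smul had hab habd (Real.sqrt βd) (c * Y ω)
    rw [Real.sq_sqrt hβd.le] at h
    rw [hSNR, hhd, hψ]
    convert congrArg (· * τ) h using 2
    · congr 1 with i
      push_cast
      ring
    · ring
  rw [integral_congr_ae (ae_of_all _ hexpand), integral_mul_const,
    integral_quadratic_of_memLp (hY ▸ memLp_sum_norm_of_isStdCGaussianVec hu), hY,
    integral_sum_norm_of_isStdCGaussianVec hu, integral_sq_sum_norm_of_isStdCGaussianVec hu,
    Real.sq_sqrt (mul_nonneg hβbr.le hβru.le), mul_assoc βd, Real.sqrt_mul hβd.le]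
  ring

/-- Mean optimal SNR in the unfavourable scenario (LOS UE-BS channel, i.i.d. Rayleigh UE-RIS
channel):
`E[SNR_unfav] = (β_d M + N √π |a_b^H a_d| √(β_d β_br β_ru) + β_br β_ru M (N + πN(N-1)/4)) τ̄`. -/
theorem mean_snr_unfavourable
    {Ω : Type*} [MeasurableSpace Ω] (P : Measure Ω) [IsProbabilityMeasure P]
    (M N : ℕ) (hM : 1 ≤ M) (hN : 1 ≤ N)
    (a_b a_d : Fin M → ℂ) (hab : ∀ i, ‖a_b i‖ = 1)
    (had : ∀ i, ‖a_d i‖ = 1) (habd : dotH a_b a_d ≠ 0)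
    (βd βbr βru τ : ℝ) (hβd : 0 < βd) (hβbr : 0 < βbr) (hβru : 0 < βru) (hτ : 0 < τ)
    (u : Ω → Fin N → ℂ) (hu : IsStdCGaussianVec P u)
    (h_d : Fin M → ℂ) (hhd : h_d = fun i => (Real.sqrt βd : ℂ) * a_d i)
    (Y : Ω → ℝ) (hY : Y = fun ω => ∑ n, ‖u ω n‖)
    (ψ : ℂ) (hψ : ψ = dotH a_b a_d / (‖dotH a_b a_d‖ : ℂ))
    (SNR : Ω → ℝ)
    (hSNR : SNR = fun ω =>
      cnormSq (fun i =>
        h_d i + (Real.sqrt (βbr * βru) : ℂ) * ψ * (Y ω : ℂ) * a_b i) * τ) :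
    ∫ ω, SNR ω ∂P =
      (βd * M + N * Real.sqrt Real.pi * ‖dotH a_b a_d‖
          * Real.sqrt (βd * βbr * βru)
        + βbr * βru * M * (N + Real.pi * N * (N - 1) / 4)) * τ :=
  mean_snr_unfavourable_general P M N a_b a_d hab had habd βd βbr βru τ hβd hβbr hβru u hu h_d hhd Y
    hY ψ hψ SNR hSNR
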